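/- Let A ∈ ℝ^{n×n}, V ∈ ℝ^{n×N}, T ∈ ℝ^{N×N}, and W ∈ ℝ^{n×N} satisfy A·V = V·T + W. Let E₁ ∈ ℝ^{N×p} denote the first p columns of the N×N identity matrix, let Γ ∈ ℝ^{p×p}, and set V₁ := V·E₁. Let μ₂(A) denote the largest eigenvalue of (A + Aᵀ)/2 and assume μ₂(A) < 0. Then ‖exp(A)·V₁·Γ − V·exp(T)·E₁·Γ‖₂ ≤ C · (1 − e^{μ₂(A)})/(−μ₂(A)), where C := sup_{λ ∈ [0,1]} ‖W·exp(λT)·E₁·Γ‖₂. -/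

import Mathlib

open Matrix

/-- The `N × q` matrix consisting of the first `q` columns of the `N × N` identity matrix. -/
def firstCols (N q : ℕ) : Matrix (Fin N) (Fin q) ℝ :=
  Matrix.of fun i j => if (i : ℕ) = (j : ℕ) then 1 else 0

/-- The spectral norm of a (rectangular) real matrix: the operator norm of the induced
linear map between Euclidean spaces. -/
noncomputable def specNorm {a b : ℕ} (M : Matrix (Fin a) (Fin b) ℝ) : ℝ :=
  ‖LinearMap.toContinuousLinearMap (Matrix.toEuclideanLin M)‖

/-! The path `s ↦ exp(sA) V exp((1 - s)T) E₁Γ` runs from `V exp(T) E₁Γ` to `exp(A) V₁Γ`, and by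
`AV = VT + W` its derivative is `exp(sA) W exp((1 - s)T) E₁Γ` (Duhamel's formula). Since
`⟪Ax, x⟫ ≤ μ₂(A) ‖x‖²`, the function `e^{-2μ₂(A)s} ‖exp(sA) x‖²` is nonincreasing, so
`‖exp(sA)‖ ≤ e^{s μ₂(A)}` and the derivative has norm at most `C e^{s μ₂(A)}`; integrating over
`[0, 1]` gives the bound. -/

open NormedSpace Set
open scoped RealInnerProductSpace

section LogarithmicNorm

variable {E : Type*} [NormedAddCommGroup E] [InnerProductSpace ℝ E] [CompleteSpace E]
  {a : E →L[ℝ] E} {μ : ℝ}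

theorem antitone_exp_mul_norm_sq_exp_smul_apply (ha : ∀ x, ⟪a x, x⟫ ≤ μ * ‖x‖ ^ 2) (x : E) :
    Antitone fun s : ℝ => Real.exp (-(2 * μ) * s) * ‖exp (s • a) x‖ ^ 2 := by
  set u : ℝ → E := fun s => exp (s • a) x
  have hu (s : ℝ) : HasDerivAt u (a (u s)) s := by
    simpa using (hasDerivAt_exp_smul_const' a s).clm_apply (hasDerivAt_const s x)
  have hderiv (s : ℝ) : HasDerivAt (fun s => Real.exp (-(2 * μ) * s) * ‖u s‖ ^ 2)
      (Real.exp (-(2 * μ) * s) * (2 * (⟪a (u s), u s⟫ - μ * ‖u s‖ ^ 2))) s := by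
    refine ((((hasDerivAt_id s).const_mul (-(2 * μ))).exp).mul (hu s).norm_sq).congr_deriv ?_
    rw [id, real_inner_comm]
    ring
  refine antitone_of_deriv_nonpos (fun s => (hderiv s).differentiableAt) fun s => ?_
  rw [(hderiv s).deriv]
  exact mul_nonpos_of_nonneg_of_nonpos (Real.exp_pos _).le
    (mul_nonpos_of_nonneg_of_nonpos zero_le_two (sub_nonpos.2 (ha _)))

theorem norm_exp_smul_le_of_inner_self_le (ha : ∀ x, ⟪a x, x⟫ ≤ μ * ‖x‖ ^ 2) {t : ℝ}
    (ht : 0 ≤ t) : ‖exp (t • a)‖ ≤ Real.exp (t * μ) := by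
  refine ContinuousLinearMap.opNorm_le_bound _ (Real.exp_nonneg _) fun x => ?_
  have hdecay := antitone_exp_mul_norm_sq_exp_smul_apply ha x ht
  simp only [mul_zero, Real.exp_zero, zero_smul, exp_zero, one_apply_eq_self, one_mul] at hdecay
  refine (pow_le_pow_iff_left₀ (norm_nonneg _) (by positivity) two_ne_zero).1 ?_
  calc ‖exp (t • a) x‖ ^ 2
      = Real.exp (2 * μ * t) * (Real.exp (-(2 * μ) * t) * ‖exp (t • a) x‖ ^ 2) := by
        rw [← mul_assoc, ← Real.exp_add, show 2 * μ * t + -(2 * μ) * t = 0 by ring,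
          Real.exp_zero, one_mul]
    _ ≤ Real.exp (2 * μ * t) * ‖x‖ ^ 2 := by gcongr
    _ = (Real.exp (t * μ) * ‖x‖) ^ 2 := by rw [mul_pow, ← Real.exp_nat_mul]; ring_nf

end LogarithmicNorm

theorem norm_sub_le_of_norm_deriv_le_mul_exp {E : Type*} [NormedAddCommGroup E] [NormedSpace ℝ E]
    {f f' : ℝ → E} {C μ : ℝ} (hμ : μ ≠ 0) (hf : ∀ s, HasDerivAt f (f' s) s)
    (bound : ∀ s ∈ Icc (0 : ℝ) 1, ‖f' s‖ ≤ C * Real.exp (s * μ)) :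
    ‖f 1 - f 0‖ ≤ C * ((Real.exp μ - 1) / μ) := by
  have hB (s : ℝ) : HasDerivAt (fun s => C * ((Real.exp (s * μ) - 1) / μ))
      (C * Real.exp (s * μ)) s := by
    refine ((((hasDerivAt_mul_const μ).exp.sub_const 1).div_const μ).const_mul C).congr_deriv ?_
    field_simp
  simpa using image_norm_le_of_norm_deriv_right_le_deriv_boundary
    (f := fun s => f s - f 0) (a := 0) (b := 1)
    (fun s _ => ((hf s).sub_const _).continuousAt.continuousWithinAt)
    (fun s _ => ((hf s).sub_const _).hasDerivWithinAt) (by simp) hB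
    (fun s hs => bound s (Ico_subset_Icc_self hs)) (right_mem_Icc.2 zero_le_one)

section Duhamel

variable {E F G : Type*} [NormedAddCommGroup E] [NormedSpace ℝ E] [CompleteSpace E]
  [NormedAddCommGroup F] [NormedSpace ℝ F] [CompleteSpace F]
  [NormedAddCommGroup G] [NormedSpace ℝ G]
  {a : E →L[ℝ] E} {t : F →L[ℝ] F} {v w : F →L[ℝ] E}

theorem hasDerivAt_exp_smul_comp_comp_exp_smul (h : a ∘L v = v ∘L t + w) (s : ℝ) :
    HasDerivAt (fun s : ℝ => exp (s • a) ∘L v ∘L exp ((1 - s) • t))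
      (exp (s • a) ∘L w ∘L exp ((1 - s) • t)) s := by
  have hT : HasDerivAt (fun s : ℝ => exp ((1 - s) • t)) (-(t * exp ((1 - s) • t))) s :=
    ((hasDerivAt_exp_smul_const' t (1 - s)).scomp s
      ((hasDerivAt_id s).const_sub 1)).congr_deriv (neg_one_smul ℝ _)
  refine ((hasDerivAt_exp_smul_const a s).clm_comp
    ((hasDerivAt_const s v).clm_comp hT)).congr_deriv ?_
  rw [show w = a ∘L v - v ∘L t by rw [h, add_sub_cancel_left]]
  ext x
  simp [sub_eq_add_neg]

theorem norm_exp_comp_comp_sub_comp_exp_comp_le (h : a ∘L v = v ∘L t + w) (r : G →L[ℝ] F)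
    {μ C : ℝ} (hμ : μ ≠ 0) (ha : ∀ s ∈ Icc (0 : ℝ) 1, ‖exp (s • a)‖ ≤ Real.exp (s * μ))
    (hw : ∀ s ∈ Icc (0 : ℝ) 1, ‖w ∘L exp (s • t) ∘L r‖ ≤ C) :
    ‖exp a ∘L v ∘L r - v ∘L exp t ∘L r‖ ≤ C * ((Real.exp μ - 1) / μ) := by
  have hf (s : ℝ) : HasDerivAt (fun s : ℝ => (exp (s • a) ∘L v ∘L exp ((1 - s) • t)) ∘L r)
      ((exp (s • a) ∘L w ∘L exp ((1 - s) • t)) ∘L r) s :=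
    ((hasDerivAt_exp_smul_comp_comp_exp_smul h s).clm_comp (hasDerivAt_const s r)).congr_deriv
      (by simp)
  have bound (s : ℝ) (hs : s ∈ Icc (0 : ℝ) 1) :
      ‖(exp (s • a) ∘L w ∘L exp ((1 - s) • t)) ∘L r‖ ≤ C * Real.exp (s * μ) := by
    have hs' : 1 - s ∈ Icc (0 : ℝ) 1 := ⟨sub_nonneg.2 hs.2, sub_le_self _ hs.1⟩
    calc ‖exp (s • a) ∘L (w ∘L exp ((1 - s) • t) ∘L r)‖
        ≤ ‖exp (s • a)‖ * ‖w ∘L exp ((1 - s) • t) ∘L r‖ := ContinuousLinearMap.opNorm_comp_le _ _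
      _ ≤ Real.exp (s * μ) * C :=
        mul_le_mul (ha s hs) (hw (1 - s) hs') (norm_nonneg _) (Real.exp_nonneg _)
      _ = C * Real.exp (s * μ) := mul_comm _ _
  simpa [ContinuousLinearMap.one_def, ContinuousLinearMap.comp_assoc] using
    norm_sub_le_of_norm_deriv_le_mul_exp hμ hf bound

end Duhamel

namespace Matrix

variable {m n o : Type*} [Fintype m] [Fintype n] [Fintype o] [DecidableEq n] [DecidableEq o]

theorem IsHermitian.inner_toEuclideanLin_self_le {S : Matrix n n ℝ} (hS : S.IsHermitian)
    {μ : ℝ} (hμ : ∀ i, hS.eigenvalues i ≤ μ) (x : EuclideanSpace ℝ n) :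
    ⟪toEuclideanLin S x, x⟫ ≤ μ * ‖x‖ ^ 2 := by
  set b := hS.eigenvectorBasis
  have hSb (i : n) : toEuclideanLin S (b i) = hS.eigenvalues i • b i := by
    ext j; simpa using congrFun (hS.mulVec_eigenvectorBasis i) j
  have hsym := isSymmetric_toEuclideanLin_iff.2 hS
  calc ⟪toEuclideanLin S x, x⟫ = ∑ i, hS.eigenvalues i * ⟪b i, x⟫ ^ 2 := by
        rw [← b.sum_inner_mul_inner]
        refine Finset.sum_congr rfl fun i _ => ?_
        rw [hsym, hSb, real_inner_smul_right, real_inner_comm x]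
        ring
    _ ≤ ∑ i, μ * ⟪b i, x⟫ ^ 2 := by gcongr with i; exact hμ i
    _ = μ * ‖x‖ ^ 2 := by rw [← Finset.mul_sum, b.sum_sq_inner_right]

theorem inner_toEuclideanLin_transpose_self (A : Matrix n n ℝ) (x : EuclideanSpace ℝ n) :
    ⟪toEuclideanLin Aᵀ x, x⟫ = ⟪toEuclideanLin A x, x⟫ := by
  rw [← conjTranspose_eq_transpose_of_trivial, toEuclideanLin_conjTranspose_eq_adjoint,
    LinearMap.adjoint_inner_left, real_inner_comm]

theorem inner_toEuclideanLin_symmPart_self (A : Matrix n n ℝ) (x : EuclideanSpace ℝ n) :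
    ⟪toEuclideanLin ((1 / 2 : ℝ) • (A + Aᵀ)) x, x⟫ = ⟪toEuclideanLin A x, x⟫ := by
  rw [map_smul, map_add, LinearMap.smul_apply, LinearMap.add_apply, real_inner_smul_left,
    inner_add_left, inner_toEuclideanLin_transpose_self]
  ring

noncomputable def toL2CLM : Matrix m n ℝ ≃ₗ[ℝ] (EuclideanSpace ℝ n →L[ℝ] EuclideanSpace ℝ m) :=
  toEuclideanLin.trans LinearMap.toContinuousLinearMap

theorem toL2CLM_mul (M : Matrix m n ℝ) (P : Matrix n o ℝ) :
    toL2CLM (M * P) = toL2CLM M ∘L toL2CLM P := by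
  ext1 x
  simp [toL2CLM]

section

-- `exp` only depends on the topology, so any normed algebra structure on matrices will do.
attribute [local instance] Matrix.linftyOpNormedRing Matrix.linftyOpNormedAlgebra

theorem toL2CLM_exp (M : Matrix n n ℝ) : toL2CLM (exp M) = exp (toL2CLM M) :=
  map_exp (toEuclideanCLM (n := n) (𝕜 := ℝ))
    (LinearMap.continuous_of_finiteDimensional (toL2CLM (m := n) (n := n)).toLinearMap) M

end

theorem toL2CLM_mul_exp_smul_mul (W : Matrix m n ℝ) (T : Matrix n n ℝ) (R : Matrix n o ℝ)
    (s : ℝ) : toL2CLM (W * (exp (s • T) * R)) = toL2CLM W ∘L exp (s • toL2CLM T) ∘L toL2CLM R := by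
  rw [toL2CLM_mul, toL2CLM_mul, toL2CLM_exp, map_smul]

theorem continuous_norm_toL2CLM_mul_exp_smul_mul (W : Matrix m n ℝ) (T : Matrix n n ℝ)
    (R : Matrix n o ℝ) : Continuous fun s : ℝ => ‖toL2CLM (W * (exp (s • T) * R))‖ := by
  have : Continuous fun s : ℝ => exp (s • toL2CLM T) :=
    continuous_iff_continuousAt.2 fun s => (hasDerivAt_exp_smul_const' (toL2CLM T) s).continuousAt
  simp only [toL2CLM_mul_exp_smul_mul]
  fun_prop

theorem norm_exp_smul_toL2CLM_le (A : Matrix n n ℝ) (hA : ((1 / 2 : ℝ) • (A + Aᵀ)).IsHermitian)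
    {μ : ℝ} (hμ : ∀ i, hA.eigenvalues i ≤ μ) {s : ℝ} (hs : 0 ≤ s) :
    ‖exp (s • toL2CLM A)‖ ≤ Real.exp (s * μ) :=
  norm_exp_smul_le_of_inner_self_le (fun x => by
    change ⟪toEuclideanLin A x, x⟫ ≤ _
    rw [← inner_toEuclideanLin_symmPart_self]
    exact hA.inner_toEuclideanLin_self_le hμ x) hs

end Matrix

theorem specNorm_eq_norm_toL2CLM {a b : ℕ} (M : Matrix (Fin a) (Fin b) ℝ) :
    specNorm M = ‖toL2CLM M‖ :=
  rfl

theorem exp_approximation_error_bound_general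
    (n p N : ℕ)
    (A : Matrix (Fin n) (Fin n) ℝ)
    (V W : Matrix (Fin n) (Fin N) ℝ)
    (T : Matrix (Fin N) (Fin N) ℝ)
    (hdec : A * V = V * T + W)
    (Γ : Matrix (Fin p) (Fin p) ℝ)
    (hA : ((1 / 2 : ℝ) • (A + Aᵀ)).IsHermitian)
    (hμ : (⨆ i, hA.eigenvalues i) < 0) :
    specNorm (NormedSpace.exp A * (V * firstCols N p) * Γ
        - V * NormedSpace.exp T * firstCols N p * Γ)
      ≤ (⨆ l : Set.Icc (0 : ℝ) 1,
            specNorm (W * NormedSpace.exp ((l : ℝ) • T) * firstCols N p * Γ))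
          * ((1 - Real.exp (⨆ i, hA.eigenvalues i)) / (-(⨆ i, hA.eigenvalues i))) := by
  simp only [Matrix.mul_assoc, specNorm_eq_norm_toL2CLM]
  set μ := ⨆ i, hA.eigenvalues i
  set C := ⨆ l : Icc (0 : ℝ) 1, ‖toL2CLM (W * (exp ((l : ℝ) • T) * (firstCols N p * Γ)))‖
  set r := toL2CLM (firstCols N p * Γ)
  have hL : toL2CLM A ∘L toL2CLM V = toL2CLM V ∘L toL2CLM T + toL2CLM W := by
    rw [← toL2CLM_mul, hdec, map_add, toL2CLM_mul]
  have hexpA (s : ℝ) (hs : s ∈ Icc (0 : ℝ) 1) : ‖exp (s • toL2CLM A)‖ ≤ Real.exp (s * μ) :=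
    norm_exp_smul_toL2CLM_le A hA (fun i => le_ciSup (Set.finite_range _).bddAbove i) hs.1
  have hC (s : ℝ) (hs : s ∈ Icc (0 : ℝ) 1) : ‖toL2CLM W ∘L exp (s • toL2CLM T) ∘L r‖ ≤ C := by
    rw [← toL2CLM_mul_exp_smul_mul]
    exact le_ciSup (isCompact_range ((continuous_norm_toL2CLM_mul_exp_smul_mul _ _ _).comp
      continuous_subtype_val)).bddAbove (⟨s, hs⟩ : Icc (0 : ℝ) 1)
  rw [map_sub, toL2CLM_mul (exp A), toL2CLM_mul V, toL2CLM_mul V, toL2CLM_mul (exp T),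
    toL2CLM_exp, toL2CLM_exp, ← neg_sub (Real.exp μ), neg_div_neg_eq]
  exact norm_exp_comp_comp_sub_comp_exp_comp_le hL r hμ.ne hexpA hC

/-- If `A·V = V·T + W` and `μ₂(A) < 0`, where `μ₂(A)` is the largest
eigenvalue of `(A + Aᵀ)/2`, then with `V₁ := V·E₁` and
`C := sup_{λ ∈ [0,1]} ‖W·exp(λT)·E₁·Γ‖₂`,
`‖exp(A)·V₁·Γ − V·exp(T)·E₁·Γ‖₂ ≤ C·(1 − e^{μ₂(A)})/(−μ₂(A))`. -/
theorem exp_approximation_error_bound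
    (n p N : ℕ) (hn : 0 < n) (hp : 0 < p) (hN : 0 < N)
    (A : Matrix (Fin n) (Fin n) ℝ)
    (V W : Matrix (Fin n) (Fin N) ℝ)
    (T : Matrix (Fin N) (Fin N) ℝ)
    (hdec : A * V = V * T + W)
    (Γ : Matrix (Fin p) (Fin p) ℝ)
    (hA : ((1 / 2 : ℝ) • (A + Aᵀ)).IsHermitian)
    (hμ : (⨆ i, hA.eigenvalues i) < 0) :
    specNorm (NormedSpace.exp A * (V * firstCols N p) * Γ
        - V * NormedSpace.exp T * firstCols N p * Γ)
      ≤ (⨆ l : Set.Icc (0 : ℝ) 1,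
            specNorm (W * NormedSpace.exp ((l : ℝ) • T) * firstCols N p * Γ))
          * ((1 - Real.exp (⨆ i, hA.eigenvalues i)) / (-(⨆ i, hA.eigenvalues i))) :=
  exp_approximation_error_bound_general n p N A V W T hdec Γ hA hμ
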